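/- Claim 1: In an n-player mining game (m₁,…,mₙ) with m₁ ≥ m₂ ≥ ⋯ ≥ mₙ, the strategy profile in which exactly pools 1 and 2 play Insightful and all other pools play RHonest (i.e., Q = {1,2}) is a pure Nash equilibrium if and only if m₁ ≥ g(m₂) and m₂ ≥ g(m₁), where g(y) := (−y³ + 2y² + y − 1)/(2y² + 4y − 3). -/

import Mathlib

/-- `f(y) := y²·(2−3y)/(1−2y)`. -/
noncomputable def f (y : ℝ) : ℝ := y^2 * (2 - 3*y) / (1 - 2*y)

/-- `g(y) := (−y³ + 2y² + y − 1)/(2y² + 4y − 3)`. -/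
noncomputable def g (y : ℝ) : ℝ := (-y^3 + 2*y^2 + y - 1) / (2*y^2 + 4*y - 3)

/-- `S(Q) := ∑_{j∈Q} m_j(1−m_j)`. -/
noncomputable def S {n : ℕ} (m : Fin n → ℝ) (Q : Finset (Fin n)) : ℝ :=
  ∑ j ∈ Q, m j * (1 - m j)

/-- Expected reward of pool `i` when the set of insightful pools is `Q`. -/
noncomputable def ER {n : ℕ} (m : Fin n → ℝ) (Q : Finset (Fin n)) (i : Fin n) : ℝ :=
  if i ∈ Q then f (m i) + 2 * m i * S m Q else m i + 2 * m i * S m Q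

/-- Relative revenue (utility) of pool `i`. -/
noncomputable def RREV {n : ℕ} (m : Fin n → ℝ) (Q : Finset (Fin n)) (i : Fin n) : ℝ :=
  ER m Q i / ∑ j, ER m Q j

/-- The profile obtained from `Q` when pool `i` unilaterally switches its strategy. -/
def switch {n : ℕ} (i : Fin n) (Q : Finset (Fin n)) : Finset (Fin n) :=
  if i ∈ Q then Q.erase i else insert i Q

/-- `Q` is a pure Nash equilibrium: no pool can strictly increase its relative
revenue by unilaterally switching its own strategy. -/
def IsNash {n : ℕ} (m : Fin n → ℝ) (Q : Finset (Fin n)) : Prop :=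
  ∀ i : Fin n, RREV m (switch i Q) i ≤ RREV m Q i

lemma f_nonneg {y : ℝ} (h0 : 0 ≤ y) (h : y < 1/2) : 0 ≤ f y := by
  unfold f
  apply div_nonneg
  · nlinarith
  · linarith

lemma stay_iff (a b : ℝ) (ha0 : 0 < a) (ha : a < 1/2) (hb0 : 0 < b) (hb : b < 1/2) :
    (a + 2 * a * (b * (1 - b))) * (f a + f b + (1 - (a + b)) + 2 * (a * (1 - a) + b * (1 - b)))
      ≤ (f a + 2 * a * (a * (1 - a) + b * (1 - b))) * (f b + (1 - b) + 2 * (b * (1 - b))) ↔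
    g b ≤ a := by
  have hda : (0:ℝ) < 1 - 2*a := by linarith
  have hdb : (0:ℝ) < 1 - 2*b := by linarith
  have hgd : 2*b^2 + 4*b - 3 < 0 := by nlinarith
  have key : (f a + 2 * a * (a * (1 - a) + b * (1 - b))) * (f b + (1 - b) + 2 * (b * (1 - b)))
      - (a + 2 * a * (b * (1 - b))) * (f a + f b + (1 - (a + b)) + 2 * (a * (1 - a) + b * (1 - b)))
      = a * (1 - a)^2 * ((-b^3 + 2*b^2 + b - 1) - a * (2*b^2 + 4*b - 3)) / ((1 - 2*a) * (1 - 2*b)) := by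
    unfold f
    have hda' : (1:ℝ) - a * 2 ≠ 0 := by intro h; linarith
    have hdb' : (1:ℝ) - b * 2 ≠ 0 := by intro h; linarith
    field_simp
    ring
  rw [← sub_nonneg, key]
  rw [div_nonneg_iff]
  constructor
  · rintro (⟨h1, _⟩ | ⟨h1, h2⟩)
    · have hpa : 0 < a * (1 - a)^2 := by nlinarith [mul_pos ha0 (mul_pos hda hda)]
      have : 0 ≤ (-b^3 + 2*b^2 + b - 1) - a * (2*b^2 + 4*b - 3) := by
        by_contra hcon
        push_neg at hcon
        nlinarith
      unfold g
      rw [div_le_iff_of_neg hgd]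
      linarith
    · nlinarith
  · intro hg
    left
    constructor
    · unfold g at hg
      rw [div_le_iff_of_neg hgd] at hg
      have hpa : 0 < a * (1 - a)^2 := by nlinarith [mul_pos ha0 (mul_pos hda hda)]
      nlinarith
    · exact le_of_lt (mul_pos hda hdb)

lemma sum_ER {n : ℕ} (m : Fin n → ℝ) (hsum : ∑ i, m i = 1) (Q : Finset (Fin n)) :
    ∑ j, ER m Q j = ∑ j ∈ Q, f (m j) + (1 - ∑ j ∈ Q, m j) + 2 * S m Q := by
  have h : ∀ j, ER m Q j = (if j ∈ Q then f (m j) - m j else 0) + (m j + m j * (2 * S m Q)) := by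
    intro j; unfold ER; split <;> ring
  rw [Finset.sum_congr rfl (fun j _ => h j), Finset.sum_add_distrib, Finset.sum_ite_mem,
    Finset.univ_inter, Finset.sum_add_distrib, ← Finset.sum_mul, hsum,
    Finset.sum_sub_distrib]
  ring

lemma total_pos {n : ℕ} (m : Fin n → ℝ) (hpos : ∀ i, 0 < m i) (hhalf : ∀ i, m i < 1/2)
    (hsum : ∑ i, m i = 1) (Q : Finset (Fin n)) (hne : Q.Nonempty) :
    0 < ∑ j, ER m Q j := by
  rw [sum_ER m hsum Q]
  have h1 : 0 ≤ ∑ j ∈ Q, f (m j) :=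
    Finset.sum_nonneg fun j _ => f_nonneg (hpos j).le (hhalf j)
  have h2 : ∑ j ∈ Q, m j ≤ 1 := by
    rw [← hsum]
    exact Finset.sum_le_sum_of_subset_of_nonneg (Finset.subset_univ Q)
      (fun i _ _ => (hpos i).le)
  have h3 : 0 < S m Q := by
    apply Finset.sum_pos _ hne
    intro j _
    have := hpos j; have := hhalf j
    nlinarith
  linarith

lemma negQ1_nonneg (a b : ℝ) (hb0 : 0 ≤ b) (hba : b ≤ a) (ha : a ≤ 1/2) :
    0 ≤ 3 - 4*b - 2*b^2 - 4*a + 4*a*b + 4*a*b^2 - 2*a^2 + 4*a^2*b := by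
  nlinarith [mul_nonneg hb0 (sub_nonneg.2 hba), sq_nonneg (a-b), sq_nonneg (1-2*a), sq_nonneg (1-2*b),
    mul_nonneg (mul_nonneg hb0 hb0) (by linarith : (0:ℝ) ≤ 1 - 2*a),
    mul_nonneg (by linarith : (0:ℝ) ≤ a) (by linarith : (0:ℝ) ≤ 1 - 2*a),
    mul_nonneg (by linarith : (0:ℝ) ≤ 1 - 2*a) (by linarith : (0:ℝ) ≤ 1 - 2*b),
    mul_nonneg (mul_nonneg (by linarith : (0:ℝ) ≤ 1 - 2*a) (by linarith : (0:ℝ) ≤ 1 - 2*b)) hb0]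

lemma Qb_nonneg (a b : ℝ) (hb0 : 0 ≤ b) (hba : b ≤ a) (ha : a ≤ 1/2) (h2 : a + 2*b ≤ 1) :
    0 ≤ 1 - 4*b + 2*b^2 + 3*b^3 - a + 4*a*b - 6*a*b^3 - 2*a^2 + 6*a^2*b - 4*a^2*b^2 + a^3 - 2*a^3*b := by
  nlinarith [sq_nonneg (1-2*a), sq_nonneg (1-2*b), sq_nonneg (a-b), sq_nonneg (1-a-2*b),
    mul_nonneg (sub_nonneg.2 hba) (by linarith : (0:ℝ) ≤ 1 - a - 2*b),
    mul_nonneg (mul_nonneg hb0 hb0) (by linarith : (0:ℝ) ≤ 1 - 2*a),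
    mul_nonneg (by linarith : (0:ℝ) ≤ 1 - 2*a) (by linarith : (0:ℝ) ≤ 1 - 2*b),
    mul_nonneg (mul_nonneg (by linarith : (0:ℝ) ≤ 1 - 2*a) (by linarith : (0:ℝ) ≤ 1 - 2*b)) hb0,
    mul_nonneg (mul_nonneg (by linarith : (0:ℝ) ≤ 1 - 2*a) (by linarith : (0:ℝ) ≤ 1 - 2*b)) (by linarith : (0:ℝ) ≤ 1 - a - 2*b),
    mul_nonneg (mul_nonneg (by linarith : (0:ℝ) ≤ 1 - 2*a) hb0) (by linarith : (0:ℝ) ≤ 1 - a - 2*b)]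

lemma Qr_nonneg (a b : ℝ) (hb0 : 0 ≤ b) (hba : b ≤ a) (ha : a ≤ 1/2) (h2 : 1 ≤ a + 2*b) :
    0 ≤ -2 + 6*b - 4*b^2 - b^3 + 6*a - 12*a*b + 2*a*b^2 + 2*a*b^3 - 4*a^2 + 2*a^2*b + 8*a^2*b^2 - a^3 + 2*a^3*b := by
  nlinarith [sq_nonneg (1-2*a), sq_nonneg (1-2*b), sq_nonneg (a-b), sq_nonneg (a+2*b-1),
    mul_nonneg (sub_nonneg.2 hba) (by linarith : (0:ℝ) ≤ a + 2*b - 1),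
    mul_nonneg (by linarith : (0:ℝ) ≤ 1 - 2*a) (by linarith : (0:ℝ) ≤ 1 - 2*b),
    mul_nonneg (mul_nonneg (by linarith : (0:ℝ) ≤ 1 - 2*a) (by linarith : (0:ℝ) ≤ 1 - 2*b)) (by linarith : (0:ℝ) ≤ a + 2*b - 1),
    mul_nonneg (mul_nonneg (by linarith : (0:ℝ) ≤ 1 - 2*b) (by linarith : (0:ℝ) ≤ 1 - 2*b)) (by linarith : (0:ℝ) ≤ 1 - 2*a),
    mul_nonneg (mul_nonneg (by linarith : (0:ℝ) ≤ 1 - 2*a) (by linarith : (0:ℝ) ≤ 1 - 2*a)) (by linarith : (0:ℝ) ≤ 1 - 2*b)]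

lemma Q_nonneg (a b c : ℝ) (hc0 : 0 ≤ c) (hcb : c ≤ b) (hba : b ≤ a) (ha : a ≤ 1/2)
    (hs : a + b + c ≤ 1) :
    0 ≤ 1 - b - 2*b^2 + b^3 - a + 4*a*b^2 - 2*a*b^3 - 2*a^2 + 4*a^2*b + a^3 - 2*a^3*b
      + c * (-3 + 4*b + 2*b^2 + 4*a - 4*a*b - 4*a*b^2 + 2*a^2 - 4*a^2*b) := by
  have hb0 : 0 ≤ b := le_trans hc0 hcb
  have hn1 := negQ1_nonneg a b hb0 hba ha
  rcases le_total (a + 2*b) 1 with h2 | h2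
  · have hqb := Qb_nonneg a b hb0 hba ha h2
    nlinarith [mul_nonneg (sub_nonneg.2 hcb) hn1]
  · have hc1 : c ≤ 1 - a - b := by linarith
    have hqr := Qr_nonneg a b hb0 hba ha h2
    nlinarith [mul_nonneg (by linarith : (0:ℝ) ≤ 1 - a - b - c) hn1]

lemma honest_le (a b c : ℝ) (hc0 : 0 < c) (hcb : c ≤ b) (hba : b ≤ a) (ha : a < 1/2)
    (hs : a + b + c ≤ 1) :
    (f c + 2 * c * (c * (1 - c) + (a * (1 - a) + b * (1 - b)))) *
        (f a + f b + (1 - (a + b)) + 2 * (a * (1 - a) + b * (1 - b)))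
      ≤ (c + 2 * c * (a * (1 - a) + b * (1 - b))) *
        (f c + (f a + f b) + (1 - (c + (a + b))) + 2 * (c * (1 - c) + (a * (1 - a) + b * (1 - b)))) := by
  have hb0 : (0:ℝ) < b := lt_of_lt_of_le hc0 hcb
  have hda : (0:ℝ) < 1 - 2*a := by linarith
  have hdb : (0:ℝ) < 1 - 2*b := by linarith
  have hdc : (0:ℝ) < 1 - 2*c := by linarith
  have key : (c + 2 * c * (a * (1 - a) + b * (1 - b))) *
        (f c + (f a + f b) + (1 - (c + (a + b))) + 2 * (c * (1 - c) + (a * (1 - a) + b * (1 - b))))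
      - (f c + 2 * c * (c * (1 - c) + (a * (1 - a) + b * (1 - b)))) *
        (f a + f b + (1 - (a + b)) + 2 * (a * (1 - a) + b * (1 - b)))
      = c * (1 - c)^2 *
          (1 - b - 2*b^2 + b^3 - a + 4*a*b^2 - 2*a*b^3 - 2*a^2 + 4*a^2*b + a^3 - 2*a^3*b
            + c * (-3 + 4*b + 2*b^2 + 4*a - 4*a*b - 4*a*b^2 + 2*a^2 - 4*a^2*b))
          / ((1 - 2*a) * ((1 - 2*b) * (1 - 2*c))) := by
    unfold f
    have hda' : (1:ℝ) - a * 2 ≠ 0 := by intro h; linarith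
    have hdb' : (1:ℝ) - b * 2 ≠ 0 := by intro h; linarith
    have hdc' : (1:ℝ) - c * 2 ≠ 0 := by intro h; linarith
    field_simp
    ring
  rw [← sub_nonneg, key]
  have hQ := Q_nonneg a b c hc0.le hcb hba ha.le hs
  have hfac : (0:ℝ) ≤ c * (1 - c)^2 := by positivity
  positivity

/-- Claim 1: `Q = {1,2}` is a pure Nash equilibrium iff `m₁ ≥ g(m₂)` and `m₂ ≥ g(m₁)`. -/
theorem two_insightful_nash_iff' (n : ℕ) (hn : 2 ≤ n) (m : Fin n → ℝ)
    (hmono : ∀ i j : Fin n, i ≤ j → m j ≤ m i)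
    (hpos : ∀ i, 0 < m i) (hhalf : ∀ i, m i < 1/2)
    (hsum : ∑ i, m i = 1) :
    IsNash m ({⟨0, by omega⟩, ⟨1, by omega⟩} : Finset (Fin n)) ↔
      (g (m ⟨1, by omega⟩) ≤ m ⟨0, by omega⟩ ∧ g (m ⟨0, by omega⟩) ≤ m ⟨1, by omega⟩) := by
  have h0n : 0 < n := by omega
  have h1n : 1 < n := by omega
  set i0 : Fin n := ⟨0, h0n⟩ with hi0def
  set i1 : Fin n := ⟨1, h1n⟩ with hi1def
  show IsNash m {i0, i1} ↔ g (m i1) ≤ m i0 ∧ g (m i0) ≤ m i1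
  set Q : Finset (Fin n) := {i0, i1} with hQdef
  set a : ℝ := m i0 with hadef
  set b : ℝ := m i1 with hbdef
  have hne : i0 ≠ i1 := Fin.ne_of_val_ne (by norm_num)
  have ha0 : 0 < a := hpos i0
  have hb0 : 0 < b := hpos i1
  have ha : a < 1/2 := hhalf i0
  have hb : b < 1/2 := hhalf i1
  have hba : b ≤ a := hmono i0 i1 (by simp [hi0def, hi1def, Fin.mk_le_mk])
  have hm0 : i0 ∈ Q := Finset.mem_insert_self i0 {i1}
  have hm1 : i1 ∈ Q := Finset.mem_insert_of_mem (Finset.mem_singleton_self i1)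
  have hn01 : i0 ∉ ({i1} : Finset (Fin n)) := Finset.notMem_singleton.mpr hne
  have hn10 : i1 ∉ ({i0} : Finset (Fin n)) := Finset.notMem_singleton.mpr hne.symm
  have hSQ : S m Q = a * (1 - a) + b * (1 - b) := by
    unfold S; rw [Finset.sum_pair hne]
  have hT : ∑ j, ER m Q j
      = f a + f b + (1 - (a + b)) + 2 * (a * (1 - a) + b * (1 - b)) := by
    rw [sum_ER m hsum, Finset.sum_pair hne, Finset.sum_pair hne, hSQ]
  have hTpos : 0 < ∑ j, ER m Q j := total_pos m hpos hhalf hsum Q ⟨i0, hm0⟩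
  -- deviation of pool i0
  have hsw0 : switch i0 Q = {i1} := by
    rw [switch, if_pos hm0, hQdef]
    exact Finset.erase_insert hn01
  have hS1 : S m {i1} = b * (1 - b) := by unfold S; rw [Finset.sum_singleton]
  have hT1 : ∑ j, ER m ({i1} : Finset (Fin n)) j = f b + (1 - b) + 2 * (b * (1 - b)) := by
    rw [sum_ER m hsum, Finset.sum_singleton, Finset.sum_singleton, hS1]
  have hT1pos : 0 < ∑ j, ER m ({i1} : Finset (Fin n)) j :=
    total_pos m hpos hhalf hsum _ ⟨i1, Finset.mem_singleton_self i1⟩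
  have hE1 : ER m ({i1} : Finset (Fin n)) i0 = a + 2 * a * (b * (1 - b)) := by
    rw [ER, if_neg hn01, hS1]
  have hE2 : ER m Q i0 = f a + 2 * a * (a * (1 - a) + b * (1 - b)) := by
    rw [ER, if_pos hm0, hSQ]
  have cond0 : (RREV m (switch i0 Q) i0 ≤ RREV m Q i0) ↔ g b ≤ a := by
    rw [hsw0]
    simp only [RREV]
    rw [div_le_div_iff₀ hT1pos hTpos, hE1, hE2, hT, hT1]
    exact stay_iff a b ha0 ha hb0 hb
  -- deviation of pool i1
  have hsw1 : switch i1 Q = {i0} := by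
    rw [switch, if_pos hm1, hQdef, Finset.pair_comm]
    exact Finset.erase_insert hn10
  have hS0 : S m {i0} = a * (1 - a) := by unfold S; rw [Finset.sum_singleton]
  have hT0 : ∑ j, ER m ({i0} : Finset (Fin n)) j = f a + (1 - a) + 2 * (a * (1 - a)) := by
    rw [sum_ER m hsum, Finset.sum_singleton, Finset.sum_singleton, hS0]
  have hT0pos : 0 < ∑ j, ER m ({i0} : Finset (Fin n)) j :=
    total_pos m hpos hhalf hsum _ ⟨i0, Finset.mem_singleton_self i0⟩
  have hE3 : ER m ({i0} : Finset (Fin n)) i1 = b + 2 * b * (a * (1 - a)) := by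
    rw [ER, if_neg hn10, hS0]
  have hE4 : ER m Q i1 = f b + 2 * b * (b * (1 - b) + a * (1 - a)) := by
    rw [ER, if_pos hm1, hSQ]; ring
  have hT' : ∑ j, ER m Q j
      = f b + f a + (1 - (b + a)) + 2 * (b * (1 - b) + a * (1 - a)) := by
    rw [hT]; ring
  have cond1 : (RREV m (switch i1 Q) i1 ≤ RREV m Q i1) ↔ g a ≤ b := by
    rw [hsw1]
    simp only [RREV]
    rw [div_le_div_iff₀ hT0pos hTpos, hE3, hE4, hT', hT0]
    exact stay_iff b a hb0 hb ha0 ha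
  constructor
  · intro hN
    exact ⟨cond0.mp (hN i0), cond1.mp (hN i1)⟩
  · rintro ⟨h1, h2⟩ i
    by_cases hi0 : i = i0
    · rw [hi0]; exact cond0.mpr h1
    by_cases hi1 : i = i1
    · rw [hi1]; exact cond1.mpr h2
    -- honest pool
    set c : ℝ := m i with hcdef
    have hiQ : i ∉ Q := by
      simp only [hQdef, Finset.mem_insert, Finset.mem_singleton]
      tauto
    have hswi : switch i Q = insert i Q := by rw [switch, if_neg hiQ]
    have hc0 : 0 < c := hpos i
    have hcb : c ≤ b := by
      apply hmono i1 i
      rw [Fin.le_def]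
      have hv0 : i.val ≠ 0 := fun h => hi0 (Fin.ext h)
      have hv1 : i.val ≠ 1 := fun h => hi1 (Fin.ext h)
      simp only [hi1def]
      omega
    have hSi : S m (insert i Q) = c * (1 - c) + (a * (1 - a) + b * (1 - b)) := by
      unfold S; rw [Finset.sum_insert hiQ, Finset.sum_pair hne]
    have hTi : ∑ j, ER m (insert i Q) j
        = f c + (f a + f b) + (1 - (c + (a + b)))
          + 2 * (c * (1 - c) + (a * (1 - a) + b * (1 - b))) := by
      rw [sum_ER m hsum, Finset.sum_insert hiQ, Finset.sum_pair hne,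
        Finset.sum_insert hiQ, Finset.sum_pair hne, hSi]
    have hTipos : 0 < ∑ j, ER m (insert i Q) j :=
      total_pos m hpos hhalf hsum _ ⟨i, Finset.mem_insert_self i Q⟩
    have hE5 : ER m (insert i Q) i
        = f c + 2 * c * (c * (1 - c) + (a * (1 - a) + b * (1 - b))) := by
      rw [ER, if_pos (Finset.mem_insert_self i Q), hSi]
    have hE6 : ER m Q i = c + 2 * c * (a * (1 - a) + b * (1 - b)) := by
      rw [ER, if_neg hiQ, hSQ]
    have hsum3 : a + b + c ≤ 1 := by
      have hsub : ∑ j ∈ insert i Q, m j ≤ 1 := by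
        rw [← hsum]
        exact Finset.sum_le_sum_of_subset_of_nonneg (Finset.subset_univ _)
          (fun k _ _ => (hpos k).le)
      rw [Finset.sum_insert hiQ, Finset.sum_pair hne] at hsub
      linarith
    rw [hswi]
    simp only [RREV]
    rw [div_le_div_iff₀ hTipos hTpos, hE5, hE6, hT, hTi]
    exact honest_le a b c hc0 hcb hba ha hsum3
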